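/- Let A be a real symmetric positive definite d×d matrix, B a real symmetric positive semidefinite d×d matrix with B ≠ 0, and 0 < α ≤ 1 a real number. Then Tr(B A⁻¹) - (1/α) ln det(α B A⁻¹ + I) > 0. -/

import Mathlib

open Matrix

theorem ml_vs_bayes_coeff_pos {d : ℕ}
    (A B : Matrix (Fin d) (Fin d) ℝ) (hA : A.PosDef) (hB : B.PosSemidef)
    (hBne : B ≠ 0) (α : ℝ) (hα0 : 0 < α) (hα1 : α ≤ 1) :
    0 < (B * A⁻¹).trace - (1 / α) * Real.log (α • (B * A⁻¹) + 1).det := by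
  classical
  have hAinv : (A⁻¹).PosDef := hA.inv
  obtain ⟨C, hC, hCC⟩ : ∃ C : Matrix (Fin d) (Fin d) ℝ, C.PosSemidef ∧ C * C = A⁻¹ :=
    open scoped MatrixOrder in
      ⟨CFC.sqrt A⁻¹, Matrix.nonneg_iff_posSemidef.mp (CFC.sqrt_nonneg _),
        CFC.sqrt_mul_sqrt_self _ (Matrix.nonneg_iff_posSemidef.mpr hAinv.posSemidef)⟩
  have hCdetsq : C.det * C.det = (A⁻¹).det := by rw [← det_mul, hCC]
  have hCdet : IsUnit C.det := by
    refine isUnit_iff_ne_zero.mpr fun h => ?_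
    have := hAinv.det_pos
    rw [← hCdetsq, h, mul_zero] at this
    exact lt_irrefl _ this
  have hCH : Cᴴ = C := hC.1
  set M := C * B * C with hMdef
  have hM : M.PosSemidef := by
    have := hB.mul_mul_conjTranspose_same C
    rwa [hCH] at this
  -- trace equality
  have htr : (B * A⁻¹).trace = M.trace := by
    rw [hMdef, trace_mul_comm (C * B) C, ← mul_assoc, hCC, trace_mul_comm]
  -- det equality
  have hconj : C * (α • (B * A⁻¹) + 1) * C⁻¹ = α • M + 1 := by
    rw [← hCC]
    have h1 : C * C⁻¹ = 1 := mul_nonsing_inv C hCdet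
    rw [Matrix.mul_add, Matrix.add_mul, mul_one, h1, mul_smul_comm, smul_mul_assoc]
    congr 1
    rw [hMdef]
    congr 1
    rw [show B * (C * C) = (B * C) * C from by rw [mul_assoc], ← mul_assoc, ← mul_assoc,
      mul_assoc (C * B * C) C C⁻¹, h1, mul_one]
  have hdeteq : (α • (B * A⁻¹) + 1).det = (α • M + 1).det := by
    rw [← hconj, Matrix.det_conj ((Matrix.isUnit_iff_isUnit_det C).mpr hCdet)]
  -- M ≠ 0
  have hMne : M ≠ 0 := by
    intro h
    apply hBne
    have hB' : B = C⁻¹ * M * C⁻¹ := by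
      rw [hMdef, ← mul_assoc, ← mul_assoc, nonsing_inv_mul C hCdet, one_mul,
        mul_assoc, mul_nonsing_inv C hCdet, mul_one]
    rw [hB', h, mul_zero, zero_mul]
  -- spectral decomposition of M
  set μ := hM.1.eigenvalues with hμdef
  have hμnn : ∀ i, 0 ≤ μ i := hM.eigenvalues_nonneg
  set U : Matrix (Fin d) (Fin d) ℝ := (hM.1.eigenvectorUnitary : Matrix (Fin d) (Fin d) ℝ)
    with hUdef
  have hst : M = U * diagonal μ * star U := by
    have := hM.1.spectral_theorem
    simpa using this
  have hUU : U * star U = 1 := mem_unitaryGroup_iff.mp hM.1.eigenvectorUnitary.2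
  have hUU' : star U * U = 1 := mem_unitaryGroup_iff'.mp hM.1.eigenvectorUnitary.2
  -- trace M = sum of eigenvalues
  have htrM : M.trace = ∑ i, μ i := by
    rw [hst, trace_mul_cycle, hUU', one_mul, trace_diagonal]
  -- det (α • M + 1) = prod
  have hdetM : (α • M + 1).det = ∏ i, (α * μ i + 1) := by
    have hconj2 : α • M + 1 = U * diagonal (fun i => α * μ i + 1) * star U := by
      have hd : α • diagonal μ + (1 : Matrix (Fin d) (Fin d) ℝ)
          = diagonal (fun i => α * μ i + 1) := by
        rw [← diagonal_one, ← diagonal_smul, ← diagonal_add]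
        congr 1
      rw [← hd, Matrix.mul_add, Matrix.add_mul, mul_one, hUU, mul_smul_comm, smul_mul_assoc,
        ← hst]
    rw [hconj2, det_mul, det_mul, mul_right_comm, mul_comm U.det, ← det_mul, hUU',
      det_one, one_mul, det_diagonal]
  -- some eigenvalue is nonzero
  have hex : ∃ j, μ j ≠ 0 := by
    by_contra h
    push_neg at h
    apply hMne
    rw [hst]
    have : diagonal μ = 0 := by
      have hμ0 : μ = 0 := funext h
      rw [hμ0]
      ext i j
      simp [diagonal]
    rw [this, mul_zero, zero_mul]
  obtain ⟨j, hj⟩ := hex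
  have hjpos : 0 < μ j := lt_of_le_of_ne (hμnn j) (Ne.symm hj)
  -- final inequality
  rw [htr, hdeteq, hdetM, htrM]
  have hpos : ∀ i, (0:ℝ) < α * μ i + 1 := fun i => by
    have := mul_nonneg hα0.le (hμnn i); linarith
  rw [Real.log_prod (fun i _ => (hpos i).ne')]
  have hle : ∀ i ∈ Finset.univ, Real.log (α * μ i + 1) ≤ α * μ i := fun i _ => by
    have := Real.log_le_sub_one_of_pos (hpos i); linarith
  have hlt : Real.log (α * μ j + 1) < α * μ j := by
    have hne : α * μ j + 1 ≠ 1 := by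
      have : 0 < α * μ j := mul_pos hα0 hjpos
      linarith
    have := Real.log_lt_sub_one_of_pos (hpos j) hne; linarith
  have hsum : ∑ i, Real.log (α * μ i + 1) < ∑ i, α * μ i :=
    Finset.sum_lt_sum hle ⟨j, Finset.mem_univ j, hlt⟩
  have hsum' : ∑ i, α * μ i = α * ∑ i, μ i := by rw [Finset.mul_sum]
  rw [hsum'] at hsum
  have : (1 / α) * ∑ i, Real.log (α * μ i + 1) < (1 / α) * (α * ∑ i, μ i) :=
    (mul_lt_mul_iff_right₀ (by positivity)).mpr hsum
  rw [one_div, inv_mul_cancel_left₀ hα0.ne'] at this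
  rw [one_div]
  linarith
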